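/- Strict convexity of the attractor fibres: for every t ∈ ℝ, the set A t is strictly convex, i.e. StrictConvex ℝ (A t) (for any two distinct points of A t, every proper convex combination of them lies in the interior of A t). -/

import Mathlib

/-!
The fibre `Afib d Ψ ρ t` is the image of the convex set of controls under the affine map
`ξ ↦ ρ • ∫ s in Iic t, Ψ t s (ξ s)`. If `x ≠ y` come from controls `ξ₁, ξ₂`, these differ on a
non-null subset of `Iic t`, and there the control `η = a • ξ₁ + b • ξ₂` producing `a • x + b • y`
has norm `< 1`, by strict convexity of the Euclidean ball. So `‖η‖ ≤ 1 - ε` on a non-null set `S`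
inside a compact window `[t - T, t]`. Since `Ψ t s ∘ Ψ s t = id`, the admissible perturbation
`η + S.indicator (fun s => Ψ s t w)` moves the output by exactly `ρ |S| • w`; for `w` small the
perturbation stays in the unit ball, which yields a ball around `a • x + b • y` inside the fibre.
-/

open MeasureTheory Set Metric Pointwise
open scoped RealInnerProductSpace

noncomputable section

abbrev Euc (d : ℕ) : Type := EuclideanSpace ℝ (Fin d)

/-- The set of admissible controls: measurable functions with values in the closed unit ball. -/
def ctrlSet (d : ℕ) : Set (ℝ → Euc d) :=
  {ξ | Measurable ξ ∧ ∀ s, ‖ξ s‖ ≤ 1}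

/-- The attractor fibre at time `t`. -/
def Afib (d : ℕ) (Ψ : ℝ → ℝ → (Euc d →L[ℝ] Euc d)) (ρ t : ℝ) : Set (Euc d) :=
  {x | ∃ ξ ∈ ctrlSet d, x = ρ • ∫ s in Set.Iic t, Ψ t s (ξ s)}

/-- The reachable-set operator of the linear differential inclusion. -/
def reach (d : ℕ) (Ψ : ℝ → ℝ → (Euc d →L[ℝ] Euc d)) (ρ t t₀ : ℝ) (S : Set (Euc d)) :
    Set (Euc d) :=
  {y | ∃ x₀ ∈ S, ∃ ξ ∈ ctrlSet d, y = Ψ t t₀ x₀ + ρ • ∫ s in Set.Icc t₀ t, Ψ t s (ξ s)}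

lemma integrableOn_exp_neg_mul_sub_Iic {γ : ℝ} (hγ : 0 < γ) (t : ℝ) :
    IntegrableOn (fun s => Real.exp (-γ * (t - s))) (Iic t) := by
  have hexp : (fun s => Real.exp (-γ * (t - s))) =
      fun s => Real.exp (-γ * t) * Real.exp (γ * s) := by
    ext s
    rw [← Real.exp_add]
    ring_nf
  rw [hexp]
  exact (integrableOn_exp_mul_Iic hγ t).const_mul _

lemma integrableOn_Iic_apply_of_norm_le_exp {E F : Type*} [NormedAddCommGroup E]
    [NormedSpace ℝ E] [NormedAddCommGroup F] [NormedSpace ℝ F]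
    {Φ : ℝ → E →L[ℝ] F} (hΦ : Continuous Φ) {K γ t : ℝ} (hγ : 0 < γ)
    (hΦle : ∀ s ≤ t, ‖Φ s‖ ≤ K * Real.exp (-γ * (t - s)))
    {f : ℝ → E} (hf : AEStronglyMeasurable f (volume.restrict (Iic t))) {c : ℝ}
    (hfle : ∀ s, ‖f s‖ ≤ c) :
    IntegrableOn (fun s => Φ s (f s)) (Iic t) := by
  refine Integrable.mono' (((integrableOn_exp_neg_mul_sub_Iic hγ t).const_mul K).const_mul c)
    ((continuous_fst.clm_apply continuous_snd).comp_aestronglyMeasurable₂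
      hΦ.aestronglyMeasurable hf) ?_
  filter_upwards [ae_restrict_mem measurableSet_Iic] with s hs
  calc ‖Φ s (f s)‖ ≤ ‖Φ s‖ * ‖f s‖ := (Φ s).le_opNorm _
    _ ≤ K * Real.exp (-γ * (t - s)) * c :=
      mul_le_mul (hΦle s hs) (hfle s) (norm_nonneg _) ((norm_nonneg _).trans (hΦle s hs))
    _ = c * (K * Real.exp (-γ * (t - s))) := by ring

lemma exists_measure_le_one_sub_inter_Icc_ne_zero {g : ℝ → ℝ} {t : ℝ}
    (h : volume ({s | g s < 1} ∩ Iic t) ≠ 0) :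
    ∃ n : ℕ, volume ({s | g s ≤ 1 - 1 / (n + 1)} ∩ Icc (t - n) t) ≠ 0 := by
  contrapose! h
  refine measure_mono_null (fun s ⟨hs, hst⟩ => ?_) (measure_iUnion_null h)
  obtain ⟨n₁, hn₁⟩ := exists_nat_one_div_lt (sub_pos.2 (show g s < 1 from hs))
  obtain ⟨n₂, hn₂⟩ := exists_nat_ge (t - s)
  set n := max n₁ n₂
  have hle₁ : (1 : ℝ) / (n + 1) ≤ 1 / (n₁ + 1) := Nat.one_div_le_one_div (le_max_left _ _)
  have hle₂ : (n₂ : ℝ) ≤ n := Nat.cast_le.2 (le_max_right _ _)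
  refine mem_iUnion.2 ⟨n, ?_, ?_, hst⟩
  · show g s ≤ 1 - 1 / (n + 1)
    linarith
  · linarith

lemma convex_ctrlSet (d : ℕ) : Convex ℝ (ctrlSet d) := by
  rintro ξ₁ ⟨hm₁, hle₁⟩ ξ₂ ⟨hm₂, hle₂⟩ a b ha hb hab
  refine ⟨(hm₁.const_smul a).add (hm₂.const_smul b), fun s => ?_⟩
  simpa using convex_closedBall (0 : Euc d) 1 (mem_closedBall_zero_iff.2 (hle₁ s))
    (mem_closedBall_zero_iff.2 (hle₂ s)) ha hb hab

lemma add_indicator_mem_ctrlSet {d : ℕ} {η ζ : ℝ → Euc d} (hη : η ∈ ctrlSet d)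
    (hζ : Measurable ζ) {S : Set ℝ} (hS : MeasurableSet S) {ε : ℝ}
    (hηS : ∀ s ∈ S, ‖η s‖ ≤ 1 - ε) (hζS : ∀ s ∈ S, ‖ζ s‖ ≤ ε) :
    η + S.indicator ζ ∈ ctrlSet d := by
  refine ⟨hη.1.add (hζ.indicator hS), fun s => ?_⟩
  by_cases hs : s ∈ S
  · calc ‖η s + S.indicator ζ s‖ ≤ ‖η s‖ + ‖ζ s‖ := by
          rw [indicator_of_mem hs]; exact norm_add_le _ _
      _ ≤ 1 := by linarith [hηS s hs, hζS s hs]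
  · simpa [indicator_of_notMem hs] using hη.2 s

section EvolutionFamily

variable {d : ℕ} {Ψ : ℝ → ℝ → (Euc d →L[ℝ] Euc d)} {K γ : ℝ}

lemma evolution_apply_apply_eq_self
    (hΨid : ∀ t : ℝ, Ψ t t = ContinuousLinearMap.id ℝ (Euc d))
    (hΨcoc : ∀ t s r : ℝ, (Ψ t s).comp (Ψ s r) = Ψ t r) (t s : ℝ) (w : Euc d) :
    Ψ t s (Ψ s t w) = w := by
  rw [← ContinuousLinearMap.comp_apply, hΨcoc, hΨid, ContinuousLinearMap.id_apply]

variable (hΨc : Continuous fun p : ℝ × ℝ => Ψ p.1 p.2) (hγ : 0 < γ)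
  (hstab : ∀ s t : ℝ, s ≤ t → ‖Ψ t s‖ ≤ K * Real.exp (-γ * (t - s)))
include hΨc hγ hstab

lemma integrableOn_Iic_evolution_control (t : ℝ) {ξ : ℝ → Euc d} (hξ : ξ ∈ ctrlSet d) :
    IntegrableOn (fun s => Ψ t s (ξ s)) (Iic t) :=
  integrableOn_Iic_apply_of_norm_le_exp (hΨc.comp (.prodMk_right t)) hγ
    (fun s hs => hstab s t hs) hξ.1.aestronglyMeasurable hξ.2

lemma setIntegral_Iic_evolution_combo (t : ℝ) {ξ₁ ξ₂ : ℝ → Euc d} (hξ₁ : ξ₁ ∈ ctrlSet d)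
    (hξ₂ : ξ₂ ∈ ctrlSet d) (a b : ℝ) :
    ∫ s in Iic t, Ψ t s ((a • ξ₁ + b • ξ₂) s) =
      a • (∫ s in Iic t, Ψ t s (ξ₁ s)) + b • ∫ s in Iic t, Ψ t s (ξ₂ s) := by
  have h₁ : Integrable (fun s => a • Ψ t s (ξ₁ s)) (volume.restrict (Iic t)) :=
    (integrableOn_Iic_evolution_control hΨc hγ hstab t hξ₁).smul a
  have h₂ : Integrable (fun s => b • Ψ t s (ξ₂ s)) (volume.restrict (Iic t)) :=
    (integrableOn_Iic_evolution_control hΨc hγ hstab t hξ₂).smul b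
  simp only [Pi.add_apply, Pi.smul_apply, map_add, map_smul]
  rw [integral_add h₁ h₂, integral_smul, integral_smul]

lemma setIntegral_Iic_evolution_add_indicator
    (hΨid : ∀ t : ℝ, Ψ t t = ContinuousLinearMap.id ℝ (Euc d))
    (hΨcoc : ∀ t s r : ℝ, (Ψ t s).comp (Ψ s r) = Ψ t r) {t : ℝ} {η : ℝ → Euc d}
    (hη : η ∈ ctrlSet d) {S : Set ℝ} (hS : MeasurableSet S) (hSt : S ⊆ Iic t)
    (hSfin : volume S ≠ ⊤) (w : Euc d) :
    ∫ s in Iic t, Ψ t s ((η + S.indicator fun s => Ψ s t w) s) =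
      (∫ s in Iic t, Ψ t s (η s)) + volume.real S • w := by
  have hind : ∀ s, Ψ t s (S.indicator (fun s => Ψ s t w) s) = S.indicator (fun _ => w) s := by
    intro s
    by_cases hs : s ∈ S
    · simp only [indicator_of_mem hs, evolution_apply_apply_eq_self hΨid hΨcoc]
    · simp only [indicator_of_notMem hs, map_zero]
  simp only [Pi.add_apply, map_add, hind]
  rw [integral_add (integrableOn_Iic_evolution_control hΨc hγ hstab t hη)
    ((integrable_indicator_iff hS).2 (integrableOn_const hSfin)).integrableOn,
    setIntegral_indicator hS, inter_eq_right.2 hSt, setIntegral_const]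

lemma mem_interior_Afib_of_norm_le_one_sub
    (hΨid : ∀ t : ℝ, Ψ t t = ContinuousLinearMap.id ℝ (Euc d))
    (hΨcoc : ∀ t s r : ℝ, (Ψ t s).comp (Ψ s r) = Ψ t r) {ρ t T ε : ℝ} (hρ : 0 < ρ)
    (hε : 0 < ε) {η : ℝ → Euc d} (hη : η ∈ ctrlSet d) {S : Set ℝ} (hS : MeasurableSet S)
    (hST : S ⊆ Icc (t - T) t) (hS0 : volume S ≠ 0) (hηS : ∀ s ∈ S, ‖η s‖ ≤ 1 - ε) :
    ρ • ∫ s in Iic t, Ψ t s (η s) ∈ interior (Afib d Ψ ρ t) := by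
  have hcont : Continuous fun s => Ψ s t := hΨc.comp (continuous_id.prodMk continuous_const)
  obtain ⟨C, hC⟩ := (isCompact_Icc (a := t - T) (b := t)).exists_bound_of_continuousOn
    hcont.continuousOn
  set C' := max C 1
  have hC' : 0 < C' := one_pos.trans_le (le_max_right _ _)
  have hSfin : volume S ≠ ⊤ := ((measure_mono hST).trans_lt measure_Icc_lt_top).ne
  set m := volume.real S
  have hm : 0 < m := ENNReal.toReal_pos hS0 hSfin
  have hρm : 0 < ρ * m := mul_pos hρ hm
  set z := ρ • ∫ s in Iic t, Ψ t s (η s)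
  refine mem_interior.2 ⟨ball z (ε * (ρ * m) / C'), fun u hu => ?_, isOpen_ball,
    mem_ball_self (by positivity)⟩
  set w := (ρ * m)⁻¹ • (u - z)
  have hw : C' * ‖w‖ ≤ ε := by
    rw [mem_ball, dist_eq_norm] at hu
    calc C' * ‖w‖ = C' * ((ρ * m)⁻¹ * ‖u - z‖) := by
          rw [norm_smul, Real.norm_of_nonneg (by positivity)]
      _ ≤ C' * ((ρ * m)⁻¹ * (ε * (ρ * m) / C')) := by gcongr
      _ = ε := by field_simp
  have hζ : ∀ s ∈ S, ‖Ψ s t w‖ ≤ ε := fun s hs =>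
    calc ‖Ψ s t w‖ ≤ ‖Ψ s t‖ * ‖w‖ := (Ψ s t).le_opNorm w
      _ ≤ C' * ‖w‖ := by gcongr; exact (hC s (hST hs)).trans (le_max_left _ _)
      _ ≤ ε := hw
  refine ⟨η + S.indicator fun s => Ψ s t w, add_indicator_mem_ctrlSet hη
    (hcont.clm_apply continuous_const).measurable hS hηS hζ, ?_⟩
  rw [setIntegral_Iic_evolution_add_indicator hΨc hγ hstab hΨid hΨcoc hη hS
    (hST.trans Icc_subset_Iic_self) hSfin, smul_add, smul_smul]
  have hmw : (ρ * m) • w = u - z := by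
    simp only [w, smul_smul, mul_inv_cancel₀ hρm.ne', one_smul]
  rw [hmw]
  abel

end EvolutionFamily

theorem attractor_strictConvex_general
    (d : ℕ)
    (L : ℝ → (Euc d →L[ℝ] Euc d))
    (Ψ : ℝ → ℝ → (Euc d →L[ℝ] Euc d))
    (hΨc : Continuous fun p : ℝ × ℝ => Ψ p.1 p.2)
    (hΨid : ∀ t : ℝ, Ψ t t = ContinuousLinearMap.id ℝ (Euc d))
    (hΨcoc : ∀ t s r : ℝ, (Ψ t s).comp (Ψ s r) = Ψ t r)
    (K γ : ℝ) (hγ : 0 < γ)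
    (hstab : ∀ s t : ℝ, s ≤ t → ‖Ψ t s‖ ≤ K * Real.exp (-γ * (t - s)))
    (ρ : ℝ) (hρ : 0 < ρ) :
    ∀ t : ℝ, StrictConvex ℝ (Afib d Ψ ρ t) := by
  rintro t _ ⟨ξ₁, hξ₁, rfl⟩ _ ⟨ξ₂, hξ₂, rfl⟩ hne a b ha hb hab
  set η := a • ξ₁ + b • ξ₂
  have hη : η ∈ ctrlSet d := convex_ctrlSet d hξ₁ hξ₂ ha.le hb.le hab
  have hslack : volume ({s | ‖η s‖ < 1} ∩ Iic t) ≠ 0 := by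
    refine fun h0 => hne (congrArg (ρ • ·) (setIntegral_congr_ae measurableSet_Iic ?_))
    refine ae_iff.2 (measure_mono_null (fun s hs => ?_) h0)
    obtain ⟨hst, hΨne⟩ := Classical.not_imp.1 hs
    exact ⟨norm_combo_lt_of_ne (hξ₁.2 s) (hξ₂.2 s) (fun h => hΨne (by rw [h])) ha hb hab, hst⟩
  obtain ⟨n, hn⟩ := exists_measure_le_one_sub_inter_Icc_ne_zero hslack
  have hS : MeasurableSet ({s | ‖η s‖ ≤ 1 - 1 / (n + 1)} ∩ Icc (t - n) t) :=
    (measurableSet_le hη.1.norm measurable_const).inter measurableSet_Icc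
  have hint := mem_interior_Afib_of_norm_le_one_sub hΨc hγ hstab hΨid hΨcoc hρ
    (by positivity) hη hS inter_subset_right hn fun s hs => hs.1
  rwa [setIntegral_Iic_evolution_combo hΨc hγ hstab t hξ₁ hξ₂, smul_add, smul_comm ρ a,
    smul_comm ρ b] at hint

/-- Strict convexity of the attractor fibres. -/
theorem attractor_strictConvex
    (d : ℕ) (hd : 1 ≤ d)
    (L : ℝ → (Euc d →L[ℝ] Euc d)) (hL : Continuous L)
    (Ψ : ℝ → ℝ → (Euc d →L[ℝ] Euc d))
    (hΨc : Continuous fun p : ℝ × ℝ => Ψ p.1 p.2)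
    (hΨid : ∀ t : ℝ, Ψ t t = ContinuousLinearMap.id ℝ (Euc d))
    (hΨcoc : ∀ t s r : ℝ, (Ψ t s).comp (Ψ s r) = Ψ t r)
    (hΨd : ∀ (s : ℝ) (x : Euc d) (t : ℝ), HasDerivAt (fun τ => Ψ τ s x) (L t (Ψ t s x)) t)
    (K γ : ℝ) (hK : 1 ≤ K) (hγ : 0 < γ)
    (hstab : ∀ s t : ℝ, s ≤ t → ‖Ψ t s‖ ≤ K * Real.exp (-γ * (t - s)))
    (ρ : ℝ) (hρ : 0 < ρ) :
    ∀ t : ℝ, StrictConvex ℝ (Afib d Ψ ρ t) :=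
  attractor_strictConvex_general d L Ψ hΨc hΨid hΨcoc K γ hγ hstab ρ hρ
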